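/- Let n ≥ 1, let ν_1,…,ν_n be nonzero real numbers, and let x_1 ≤ x_2 ≤ … ≤ x_{n+1} be real. Then ∫_{W^{n,n+1}(x)} det( e^{ν_i y_j} )_{i,j=1}^n dy_1⋯dy_n = ( ∏_{i=1}^n ν_i^{-1} ) · det C, where C is the (n+1)×(n+1) matrix with first row C_{1,j} = 1 and C_{i+1,j} = e^{ν_i x_j} for 1 ≤ i ≤ n and 1 ≤ j ≤ n+1. (Applied with ν_i = μ_i - μ_{n+1}, this is the paper's computation of the intertwining kernel applied to the eigenfunction ĥ_n^{μ_{n+1},μ^{(n)}} in the construction for Brownian motions with drifts.) -/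

import Mathlib

/-!
Expanding the determinant over permutations, the integrand is a signed sum of products of
functions of one variable each, so its integral over the box `∏ⱼ [x_j, x_{j+1}]` is the
determinant of the one-dimensional integrals `ν_i⁻¹ (e^{ν_i x_{j+1}} - e^{ν_i x_j})`.
Pulling `ν_i⁻¹` out of the rows leaves a matrix of consecutive differences, which is what
subtracting each column of `C` from the next one and expanding along the row of ones produces.
-/

open MeasureTheory

theorem integral_exp_mul_Icc {c a b : ℝ} (hc : c ≠ 0) (hab : a ≤ b) :
    ∫ t in Set.Icc a b, Real.exp (c * t) = c⁻¹ * (Real.exp (c * b) - Real.exp (c * a)) := by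
  rw [integral_Icc_eq_integral_Ioc, ← intervalIntegral.integral_of_le hab,
    intervalIntegral.integral_comp_mul_left _ hc, integral_exp, smul_eq_mul]

theorem integral_det_eq_det_integral {ι α 𝕜 : Type*} [Fintype ι] [DecidableEq ι] [RCLike 𝕜]
    [MeasurableSpace α] {μ : ι → Measure α} [∀ j, SigmaFinite (μ j)] {f : ι → α → 𝕜}
    (hf : ∀ i j, Integrable (f i) (μ j)) :
    ∫ y, (Matrix.of fun i j => f i (y j)).det ∂Measure.pi μ
      = (Matrix.of fun i j => ∫ t, f i t ∂μ j).det := by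
  simp only [Matrix.det_apply', Matrix.of_apply]
  rw [integral_finsetSum _ fun σ _ => (Integrable.fintype_prod fun j => hf (σ j) j).const_mul _]
  refine Finset.sum_congr rfl fun σ _ => ?_
  rw [integral_const_mul, integral_fintype_prod_eq_prod (fun j t => f (σ j) t)]

theorem Matrix.det_of_cases_one_eq_det_sub {R : Type*} [CommRing R] {n : ℕ}
    (f : Fin n → Fin (n + 1) → R) :
    det (of fun i j : Fin (n + 1) => Fin.cases (motive := fun _ => R) 1 (fun i' => f i' j) i)
      = det (of fun i j : Fin n => f i j.succ - f i j.castSucc) := by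
  -- subtracting each column from the next one leaves `1, 0, …, 0` in the first row
  rw [det_eq_of_forall_col_eq_smul_add_pred (B := of fun i j : Fin (n + 1) =>
      Fin.cases (motive := fun _ => R) (Fin.cases (motive := fun _ => R) 1 (fun i' => f i' 0) i)
        (fun j' : Fin n => Fin.cases (motive := fun _ => R) 0
          (fun i' => f i' j'.succ - f i' j'.castSucc) i) j) (fun _ => 1)
      (fun i => by simp) (fun i j => by cases i using Fin.cases <;> simp)]
  rw [det_succ_row_zero, Fin.sum_univ_succ]
  simp [submatrix]

theorem integral_det_exp_over_interlacing_region_general (n : ℕ)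
    (ν : Fin n → ℝ) (hν : ∀ i, ν i ≠ 0)
    (x : Fin (n + 1) → ℝ) (hx : Monotone x) :
    ∫ y in Set.univ.pi (fun j : Fin n => Set.Icc (x j.castSucc) (x j.succ)),
        Matrix.det (Matrix.of fun i j : Fin n => Real.exp (ν i * y j))
      = (∏ i : Fin n, (ν i)⁻¹) *
          Matrix.det (Matrix.of fun i j : Fin (n + 1) =>
            Fin.cases (motive := fun _ => ℝ) 1
              (fun i' : Fin n => Real.exp (ν i' * x j)) i) := by
  rw [volume_pi, Measure.restrict_pi_pi, integral_det_eq_det_integral fun i j =>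
      (by fun_prop : Continuous fun t => Real.exp (ν i * t)).integrableOn_Icc,
    Matrix.det_of_cases_one_eq_det_sub, ← Matrix.det_mul_column]
  congr 2 with i j
  exact integral_exp_mul_Icc (hν i) (hx (Fin.castSucc_le_succ j))

/-- For nonzero `ν_1,…,ν_n`:
`∫_{W^{n,n+1}(x)} det(e^{ν_i y_j})_{i,j=1}^n dy = (∏_i ν_i⁻¹) · det C`, where `C` is the
`(n+1)×(n+1)` matrix with first row all ones and `C_{i+1,j} = e^{ν_i x_j}`. -/
theorem integral_det_exp_over_interlacing_region (n : ℕ) (hn : 1 ≤ n)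
    (ν : Fin n → ℝ) (hν : ∀ i, ν i ≠ 0)
    (x : Fin (n + 1) → ℝ) (hx : Monotone x) :
    ∫ y in Set.univ.pi (fun j : Fin n => Set.Icc (x j.castSucc) (x j.succ)),
        Matrix.det (Matrix.of fun i j : Fin n => Real.exp (ν i * y j))
      = (∏ i : Fin n, (ν i)⁻¹) *
          Matrix.det (Matrix.of fun i j : Fin (n + 1) =>
            Fin.cases (motive := fun _ => ℝ) 1
              (fun i' : Fin n => Real.exp (ν i' * x j)) i) :=
  integral_det_exp_over_interlacing_region_general n ν hν x hx
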